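/- Let Cov be symmetric positive definite, fix i, and for λ ≥ 0 let θ*(λ) minimize θᵀ Cov θ + λΣ_{j≠i}|θ_j| over {θ_i = -1}. Then inf over λ ≥ 0 of θ*(λ)ᵀ Cov θ*(λ) / Cov_{ii} equals det(Cov) / (Cov_{ii} · det(Cov_{[n]∖i}^{[n]∖i})). -/

import Mathlib

open Matrix Finset

/-!
Let `α = (Cov⁻¹)ᵢᵢ`. Cauchy–Schwarz for the inner product `⟨x, y⟩ = x ⬝ᵥ Cov *ᵥ y`, applied to
`θ` and `Cov⁻¹ eᵢ`, gives `θᵢ² ≤ (θ ⬝ᵥ Cov *ᵥ θ) α`, so every `θ` with `θᵢ = -1` has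
`θ ⬝ᵥ Cov *ᵥ θ ≥ 1 / α`, with equality at `θ = -α⁻¹ Cov⁻¹ eᵢ`. Hence the unpenalized minimizer
`θ*(0)` already attains the lower bound shared by all `θ*(λ)`, and Cramer's rule identifies
`1 / α` with `det Cov / det Cov_{[n]∖i}^{[n]∖i}`.
-/

namespace Matrix

theorem inv_apply_self_eq_det_submatrix_div_det {K : Type*} [Field K] {n : ℕ}
    (A : Matrix (Fin (n + 1)) (Fin (n + 1)) K) (i : Fin (n + 1)) :
    A⁻¹ i i = (A.submatrix i.succAbove i.succAbove).det / A.det := by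
  rw [inv_def, smul_apply, adjugate_fin_succ_eq_det_submatrix, Ring.inverse_eq_inv',
    (Even.add_self (i : ℕ)).neg_one_pow, one_mul, smul_eq_mul, div_eq_inv_mul]

namespace PosDef

variable {ι : Type*} [Fintype ι] [DecidableEq ι] {A : Matrix ι ι ℝ}

theorem sq_dotProduct_le_dotProduct_mulVec_mul (hA : A.PosDef) (u θ : ι → ℝ) :
    (u ⬝ᵥ θ) ^ 2 ≤ (θ ⬝ᵥ A *ᵥ θ) * (u ⬝ᵥ A⁻¹ *ᵥ u) := by
  have hAinv : A * A⁻¹ = 1 := A.mul_nonsing_inv (isUnit_iff_ne_zero.mpr hA.det_pos.ne')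
  have hsymm : Aᵀ = A := hA.isHermitian.eq
  set B := Matrix.toBilin' A
  have hB : ∀ x y, B x y = x ⬝ᵥ A *ᵥ y := toBilin'_apply' A
  have hB_nonneg : ∀ x, 0 ≤ B x x := fun x => by
    rw [hB]; simpa using hA.posSemidef.dotProduct_mulVec_nonneg x
  set w := A⁻¹ *ᵥ u
  have hθw : B θ w = u ⬝ᵥ θ := by
    rw [hB, mulVec_mulVec, hAinv, one_mulVec, dotProduct_comm]
  have hwθ : B w θ = u ⬝ᵥ θ := by
    rw [hB, dotProduct_mulVec, ← mulVec_transpose, hsymm, ← hθw, hB, dotProduct_comm]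
  calc (u ⬝ᵥ θ) ^ 2 = B θ w * B w θ := by rw [hθw, hwθ, sq]
    _ ≤ B θ θ * B w w :=
      LinearMap.BilinForm.apply_mul_apply_le_of_forall_zero_le B hB_nonneg θ w
    _ = (θ ⬝ᵥ A *ᵥ θ) * (u ⬝ᵥ A⁻¹ *ᵥ u) := by
      rw [hB, hB, mulVec_mulVec, hAinv, one_mulVec, dotProduct_comm w]

theorem sq_apply_div_inv_apply_le_dotProduct_mulVec (hA : A.PosDef) (θ : ι → ℝ) (i : ι) :
    θ i ^ 2 / A⁻¹ i i ≤ θ ⬝ᵥ A *ᵥ θ := by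
  rw [div_le_iff₀ hA.inv.diag_pos]
  simpa using hA.sq_dotProduct_le_dotProduct_mulVec_mul (Pi.single i 1) θ

theorem exists_apply_eq_dotProduct_mulVec_eq (hA : A.PosDef) (i : ι) (c : ℝ) :
    ∃ θ : ι → ℝ, θ i = c ∧ θ ⬝ᵥ A *ᵥ θ = c ^ 2 / A⁻¹ i i := by
  have hα : A⁻¹ i i ≠ 0 := hA.inv.diag_pos.ne'
  set θ := (c / A⁻¹ i i) • (A⁻¹ *ᵥ Pi.single i 1)
  have hθi : θ i = c := by
    simp [θ, mulVec_single, div_mul_cancel₀ _ hα]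
  have hAθ : A *ᵥ θ = (c / A⁻¹ i i) • Pi.single i 1 := by
    rw [mulVec_smul, mulVec_mulVec,
      A.mul_nonsing_inv (isUnit_iff_ne_zero.mpr hA.det_pos.ne'), one_mulVec]
  refine ⟨θ, hθi, ?_⟩
  rw [hAθ, dotProduct_smul, dotProduct_single, hθi, smul_eq_mul]
  ring

end PosDef

end Matrix

/-- The infimum over `λ ≥ 0` of the relative error
`θ*(λ)ᵀ Cov θ*(λ) / Cov_{ii}` equals
`det Cov / (Cov_{ii} · det(Cov with row/column i removed))`, where `θ*(λ)` minimizes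
`θᵀ Cov θ + λ ∑_{j≠i} |θ_j|` over `{θ : θ i = -1}`. -/
theorem stmt_15 {n : ℕ} (Cov : Matrix (Fin (n + 1)) (Fin (n + 1)) ℝ) (hCov : Cov.PosDef)
    (i : Fin (n + 1)) (θstar : ℝ → Fin (n + 1) → ℝ)
    (hθi : ∀ lam : ℝ, 0 ≤ lam → θstar lam i = -1)
    (hmin : ∀ lam : ℝ, 0 ≤ lam → ∀ θ : Fin (n + 1) → ℝ, θ i = -1 →
      θstar lam ⬝ᵥ Cov.mulVec (θstar lam) + lam * ∑ j ∈ Finset.univ.erase i, |θstar lam j| ≤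
        θ ⬝ᵥ Cov.mulVec θ + lam * ∑ j ∈ Finset.univ.erase i, |θ j|) :
    IsGLB {v : ℝ | ∃ lam : ℝ, 0 ≤ lam ∧
        v = (θstar lam ⬝ᵥ Cov.mulVec (θstar lam)) / Cov i i}
      (Cov.det / (Cov i i * (Cov.submatrix i.succAbove i.succAbove).det)) := by
  have hlow : ∀ lam, 0 ≤ lam → (Cov⁻¹ i i)⁻¹ ≤ θstar lam ⬝ᵥ Cov *ᵥ θstar lam := fun lam hlam => by
    simpa [hθi lam hlam] using hCov.sq_apply_div_inv_apply_le_dotProduct_mulVec (θstar lam) i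
  obtain ⟨θ₀, hθ₀i, hθ₀⟩ := hCov.exists_apply_eq_dotProduct_mulVec_eq i (-1)
  have hzero : θstar 0 ⬝ᵥ Cov *ᵥ θstar 0 = (Cov⁻¹ i i)⁻¹ :=
    le_antisymm (by simpa [hθ₀] using hmin 0 le_rfl θ₀ hθ₀i) (hlow 0 le_rfl)
  rw [show Cov.det / (Cov i i * (Cov.submatrix i.succAbove i.succAbove).det)
      = (Cov⁻¹ i i)⁻¹ / Cov i i by
    rw [inv_apply_self_eq_det_submatrix_div_det, inv_div, div_div, mul_comm]]
  refine IsLeast.isGLB ⟨⟨0, le_rfl, by rw [hzero]⟩, ?_⟩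
  rintro _ ⟨lam, hlam, rfl⟩
  exact div_le_div_of_nonneg_right (hlow lam hlam) hCov.diag_pos.le
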